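/- (Characterization of global minimizers of the DIET latent objective.) Under the cluster-centric DGP, a triple (h, W, β), with h: S^{d-1} → R^d continuous, W a classification head with rows w_i^T for i ∈ I, and β > 0, globally minimizes the latent DIET objective L_z(h, W, β) = E_{(z,I)}[ −ln( exp(β⟨w_I, h(z)⟩) / Σ_{j∈I} exp(β⟨w_j, h(z)⟩) ) ] if and only if β⟨w_i − w_k, h(z)⟩ = κ⟨v_{𝒞(i)} − v_{𝒞(k)}, z⟩ holds for all i, k ∈ I and all z ∈ S^{d-1}. -/

import Mathlib

open MeasureTheory Metric
open scoped RealInnerProductSpace BigOperators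

/-- The uniform (surface) measure on the unit sphere of `ℝ^d`, obtained from the
Lebesgue measure on `EuclideanSpace ℝ (Fin d)`. -/
noncomputable def sphereUniform (d : ℕ) :
    Measure (Metric.sphere (0 : EuclideanSpace ℝ (Fin d)) 1) :=
  (volume : Measure (EuclideanSpace ℝ (Fin d))).toSphere

/-- A finite system of vectors is an *affine generator system* of `ℝ^d` if every vector
is a linear combination of the system with coefficients summing to `1`. -/
def IsAffineGenerator {d : ℕ} {ι : Type} [Fintype ι]
    (v : ι → EuclideanSpace ℝ (Fin d)) : Prop :=
  ∀ x : EuclideanSpace ℝ (Fin d), ∃ α : ι → ℝ,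
    (∑ c, α c = 1) ∧ x = ∑ c, α c • v c

/-- The latent DIET objective
`L_z(h, W, β) = E_{(z,I)}[ −ln( exp(β⟨w_I, h z⟩) / Σ_j exp(β⟨w_j, h z⟩) ) ]`,
where the instance label is uniform on `Idx` and, conditionally on the label `i`, the
latent `z` is distributed on the unit sphere according to the von Mises–Fisher density
proportional to `exp (κ ⟪v (Cl i), z⟫)` with respect to the uniform (surface) measure. -/
noncomputable def dietLossZ (d : ℕ) {Cset Idx : Type} [Fintype Idx]
    (v : Cset → EuclideanSpace ℝ (Fin d)) (κ : ℝ) (Cl : Idx → Cset)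
    (h : Metric.sphere (0 : EuclideanSpace ℝ (Fin d)) 1 → EuclideanSpace ℝ (Fin d))
    (w : Idx → EuclideanSpace ℝ (Fin d)) (β : ℝ) : ℝ :=
  (Fintype.card Idx : ℝ)⁻¹ * ∑ i : Idx,
    ((∫ z : Metric.sphere (0 : EuclideanSpace ℝ (Fin d)) 1,
        Real.exp (κ * ⟪v (Cl i), (z : EuclideanSpace ℝ (Fin d))⟫)
        ∂(sphereUniform d))⁻¹ *
      ∫ z : Metric.sphere (0 : EuclideanSpace ℝ (Fin d)) 1,
        Real.exp (κ * ⟪v (Cl i), (z : EuclideanSpace ℝ (Fin d))⟫) *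
          (- Real.log (Real.exp (β * ⟪w i, h z⟫) /
            ∑ j : Idx, Real.exp (β * ⟪w j, h z⟫)))
        ∂(sphereUniform d))

/-!
Since the uniform measure on the sphere is invariant under reflections and all `v c` are unit
vectors, the von Mises–Fisher normalisers of the classes coincide. The loss is therefore a
positive multiple of the integral over the sphere of the pointwise cross-entropy between the
model's softmax and the posterior softmax of the scores `κ ⟪v (Cl i), z⟫`. By Gibbs' inequality
this integrand is minimal exactly where the two softmaxes agree, the posterior being realised by
`(h, w, β) = (id, κ • v ∘ Cl, 1)`; by continuity a minimiser agrees everywhere, and two softmaxes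
agree iff their score differences do.
-/

open Set InformationTheory
open scoped Pointwise

section Softmax

variable {ι : Type*} [Fintype ι]

noncomputable def softmax (s : ι → ℝ) (i : ι) : ℝ := Real.exp (s i) / ∑ j, Real.exp (s j)

/-- The cross-entropy `H(softmax t, softmax s)`, scaled by the normalising constant
`∑ j, exp (t j)` of the weights. -/
noncomputable def crossEntropy (t s : ι → ℝ) : ℝ := ∑ i, Real.exp (t i) * -Real.log (softmax s i)

variable (s t : ι → ℝ)

lemma sum_exp_pos [Nonempty ι] : 0 < ∑ j, Real.exp (s j) :=
  Finset.sum_pos (fun _ _ => Real.exp_pos _) Finset.univ_nonempty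

lemma softmax_pos [Nonempty ι] (i : ι) : 0 < softmax s i :=
  div_pos (Real.exp_pos _) (sum_exp_pos s)

lemma sum_softmax [Nonempty ι] : ∑ i, softmax s i = 1 := by
  simp_rw [softmax, ← Finset.sum_div]
  exact div_self (sum_exp_pos s).ne'

lemma exp_eq_mul_softmax [Nonempty ι] (i : ι) :
    Real.exp (s i) = (∑ j, Real.exp (s j)) * softmax s i :=
  (mul_div_cancel₀ _ (sum_exp_pos s).ne').symm

lemma log_softmax [Nonempty ι] (i : ι) :
    Real.log (softmax s i) = s i - Real.log (∑ j, Real.exp (s j)) := by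
  rw [softmax, Real.log_div (Real.exp_pos _).ne' (sum_exp_pos s).ne', Real.log_exp]

lemma softmax_add_const (c : ℝ) : softmax (fun j => s j + c) = softmax s := by
  funext i
  simp only [softmax, Real.exp_add, ← Finset.sum_mul]
  exact mul_div_mul_right _ _ (Real.exp_pos c).ne'

lemma softmax_eq_softmax_iff [Nonempty ι] :
    softmax s = softmax t ↔ ∀ i k, s i - s k = t i - t k := by
  constructor
  · intro h i k
    have hi := log_softmax s i
    have hk := log_softmax s k
    rw [h, log_softmax] at hi hk
    linarith
  · intro h
    funext i
    have hs : s = fun j => t j + (s i - t i) := funext fun j => by linarith [h i j]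
    rw [hs, softmax_add_const]

lemma continuous_log_softmax (i : ι) : Continuous fun s : ι → ℝ => Real.log (softmax s i) := by
  have : Nonempty ι := ⟨i⟩
  refine Continuous.log ?_ fun s => (softmax_pos s i).ne'
  exact (Real.continuous_exp.comp (continuous_apply i)).div
    (continuous_finsetSum _ fun j _ => Real.continuous_exp.comp (continuous_apply j))
    fun s => (sum_exp_pos s).ne'

/-- Gibbs' inequality, with the defect written as a sum of nonnegative `klFun` terms. -/
lemma crossEntropy_sub_self [Nonempty ι] :
    crossEntropy t s - crossEntropy t t =
      (∑ j, Real.exp (t j)) * ∑ i, softmax s i * klFun (softmax t i / softmax s i) := by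
  have hterm : ∀ i, softmax s i * klFun (softmax t i / softmax s i) =
      softmax t i * (Real.log (softmax t i) - Real.log (softmax s i)) +
        (softmax s i - softmax t i) := by
    intro i
    have hq := (softmax_pos s i).ne'
    rw [klFun_apply, Real.log_div (softmax_pos t i).ne' hq]
    field_simp
    ring
  rw [Finset.sum_congr rfl fun i _ => hterm i, Finset.sum_add_distrib, Finset.sum_sub_distrib,
    sum_softmax, sum_softmax, sub_self, add_zero, Finset.mul_sum, crossEntropy, crossEntropy,
    ← Finset.sum_sub_distrib]
  refine Finset.sum_congr rfl fun i _ => ?_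
  rw [exp_eq_mul_softmax t i]
  ring

lemma crossEntropy_self_le [Nonempty ι] : crossEntropy t t ≤ crossEntropy t s := by
  rw [← sub_nonneg, crossEntropy_sub_self]
  exact mul_nonneg (sum_exp_pos t).le <| Finset.sum_nonneg fun i _ => mul_nonneg
    (softmax_pos s i).le (klFun_nonneg (div_pos (softmax_pos t i) (softmax_pos s i)).le)

lemma crossEntropy_eq_self_iff [Nonempty ι] :
    crossEntropy t s = crossEntropy t t ↔ softmax s = softmax t := by
  refine ⟨fun h => ?_, fun h => by rw [crossEntropy, crossEntropy, h]⟩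
  rw [← sub_eq_zero, crossEntropy_sub_self, mul_eq_zero, or_iff_right (sum_exp_pos t).ne',
    Finset.sum_eq_zero_iff_of_nonneg fun i _ => mul_nonneg (softmax_pos s i).le
      (klFun_nonneg (div_pos (softmax_pos t i) (softmax_pos s i)).le)] at h
  funext i
  have hi := h i (Finset.mem_univ i)
  rw [mul_eq_zero, or_iff_right (softmax_pos s i).ne',
    klFun_eq_zero_iff (div_pos (softmax_pos t i) (softmax_pos s i)).le,
    div_eq_one_iff_eq (softmax_pos s i).ne'] at hi
  exact hi.symm

end Softmax

lemma Continuous.eq_of_le_of_integral_le {X : Type*} [TopologicalSpace X] [MeasurableSpace X]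
    [OpensMeasurableSpace X] {μ : Measure X} [μ.IsOpenPosMeasure] {f g : X → ℝ}
    (hf : Continuous f) (hg : Continuous g) (hfi : Integrable f μ) (hgi : Integrable g μ)
    (hfg : f ≤ g) (h : ∫ x, g x ∂μ ≤ ∫ x, f x ∂μ) : f = g := by
  have hzero : ∫ x, (g - f) x ∂μ = 0 :=
    le_antisymm (by rw [integral_sub' hgi hfi]; linarith)
      (integral_nonneg fun x => sub_nonneg.2 (hfg x))
  rw [integral_eq_zero_iff_of_nonneg (f := g - f) (fun x => sub_nonneg.2 (hfg x)) (hgi.sub hfi),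
    (hg.sub hf).ae_eq_iff_eq μ continuous_zero] at hzero
  exact (sub_eq_zero.1 hzero).symm

section SphereIsometry

variable {E : Type*} [NormedAddCommGroup E] [InnerProductSpace ℝ E] [MeasurableSpace E]
  [BorelSpace E]

def LinearIsometryEquiv.sphereHomeomorph (f : E ≃ₗᵢ[ℝ] E) : sphere (0 : E) 1 ≃ₜ sphere (0 : E) 1 :=
  f.toHomeomorph.subtype fun x => by simp

lemma LinearIsometryEquiv.measurePreserving_sphereHomeomorph {μ : Measure E} (f : E ≃ₗᵢ[ℝ] E)
    (hf : MeasurePreserving f μ μ) :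
    MeasurePreserving f.sphereHomeomorph μ.toSphere μ.toSphere := by
  set g := f.sphereHomeomorph
  refine ⟨g.continuous.measurable, Measure.ext fun s hs => ?_⟩
  rw [Measure.map_apply g.continuous.measurable hs, μ.toSphere_apply' hs,
    μ.toSphere_apply' (hs.preimage g.continuous.measurable)]
  have hval : Subtype.val '' (g ⁻¹' s) = f ⁻¹' (Subtype.val '' s) := by
    ext x
    constructor
    · rintro ⟨z, hz, rfl⟩
      exact ⟨g z, hz, rfl⟩
    · rintro ⟨z, hz, hzx⟩
      exact ⟨g.symm z, by simpa using hz, by simp [g, LinearIsometryEquiv.sphereHomeomorph, hzx]⟩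
  have hsmul : Ioo (0 : ℝ) 1 • f ⁻¹' (Subtype.val '' s) =
      f ⁻¹' (Ioo (0 : ℝ) 1 • Subtype.val '' s) := by
    ext x
    simp only [mem_smul, mem_preimage]
    constructor
    · rintro ⟨r, hr, y, hy, rfl⟩
      exact ⟨r, hr, f y, hy, (f.map_smul r y).symm⟩
    · rintro ⟨r, hr, y, hy, hyx⟩
      refine ⟨r, hr, f.symm y, by simpa using hy, ?_⟩
      rw [← f.symm_apply_apply x, ← hyx, f.symm.map_smul]
  rw [hval, hsmul, hf.measure_preimage_emb f.toHomeomorph.measurableEmbedding]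

lemma integral_toSphere_comp_inner_eq_of_norm_eq {μ : Measure E}
    (hμ : ∀ f : E ≃ₗᵢ[ℝ] E, MeasurePreserving f μ μ)
    (φ : ℝ → ℝ) {u u' : E} (h : ‖u‖ = ‖u'‖) :
    ∫ z, φ ⟪u, (z : E)⟫ ∂μ.toSphere = ∫ z, φ ⟪u', (z : E)⟫ ∂μ.toSphere := by
  set f := Submodule.reflection (ℝ ∙ (u' - u))ᗮ
  have hfu : f u' = u := Submodule.reflection_sub h.symm
  rw [← (f.measurePreserving_sphereHomeomorph (hμ f)).integral_comp
    f.sphereHomeomorph.measurableEmbedding]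
  congr 1 with z
  rw [← hfu]
  exact congrArg φ (f.inner_map_map u' z)

end SphereIsometry

instance (d : ℕ) : IsFiniteMeasure (sphereUniform d) :=
  inferInstanceAs (IsFiniteMeasure (volume : Measure (EuclideanSpace ℝ (Fin d))).toSphere)

instance (d : ℕ) : (sphereUniform d).IsOpenPosMeasure :=
  inferInstanceAs (volume : Measure (EuclideanSpace ℝ (Fin d))).toSphere.IsOpenPosMeasure

lemma Continuous.integrable_sphereUniform {d : ℕ}
    {f : Metric.sphere (0 : EuclideanSpace ℝ (Fin d)) 1 → ℝ} (hf : Continuous f) :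
    Integrable f (sphereUniform d) :=
  hf.integrable_of_hasCompactSupport (HasCompactSupport.of_compactSpace f)

section LatentLoss

variable {d : ℕ} {Cset Idx : Type} [Fintype Idx] (v : Cset → EuclideanSpace ℝ (Fin d)) (κ : ℝ)
  (Cl : Idx → Cset) (h : Metric.sphere (0 : EuclideanSpace ℝ (Fin d)) 1 → EuclideanSpace ℝ (Fin d))
  (w : Idx → EuclideanSpace ℝ (Fin d)) (β : ℝ)

noncomputable def latentCrossEntropy (z : Metric.sphere (0 : EuclideanSpace ℝ (Fin d)) 1) : ℝ :=
  crossEntropy (fun i => κ * ⟪v (Cl i), (z : EuclideanSpace ℝ (Fin d))⟫) (fun i => β * ⟪w i, h z⟫)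

noncomputable def latentEntropy (z : Metric.sphere (0 : EuclideanSpace ℝ (Fin d)) 1) : ℝ :=
  crossEntropy (fun i => κ * ⟪v (Cl i), (z : EuclideanSpace ℝ (Fin d))⟫)
    (fun i => κ * ⟪v (Cl i), (z : EuclideanSpace ℝ (Fin d))⟫)

variable {v κ Cl h w β}

lemma latentCrossEntropy_posterior :
    latentCrossEntropy v κ Cl (↑) (fun i => κ • v (Cl i)) 1 = latentEntropy v κ Cl := by
  funext z
  simp only [latentCrossEntropy, latentEntropy, real_inner_smul_left, one_mul]

lemma latentEntropy_le_latentCrossEntropy [Nonempty Idx]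
    (z : Metric.sphere (0 : EuclideanSpace ℝ (Fin d)) 1) :
    latentEntropy v κ Cl z ≤ latentCrossEntropy v κ Cl h w β z :=
  crossEntropy_self_le _ _

lemma latentCrossEntropy_eq_latentEntropy_iff [Nonempty Idx]
    (z : Metric.sphere (0 : EuclideanSpace ℝ (Fin d)) 1) :
    latentCrossEntropy v κ Cl h w β z = latentEntropy v κ Cl z ↔
      ∀ i k, β * ⟪w i - w k, h z⟫ = κ * ⟪v (Cl i) - v (Cl k), (z : EuclideanSpace ℝ (Fin d))⟫ := by
  rw [latentCrossEntropy, latentEntropy, crossEntropy_eq_self_iff, softmax_eq_softmax_iff]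
  simp only [inner_sub_left, mul_sub]

lemma continuous_latentCrossEntropy_term (hh : Continuous h) (i : Idx) :
    Continuous fun z : Metric.sphere (0 : EuclideanSpace ℝ (Fin d)) 1 =>
      Real.exp (κ * ⟪v (Cl i), (z : EuclideanSpace ℝ (Fin d))⟫) *
        -Real.log (softmax (fun j => β * ⟪w j, h z⟫) i) :=
  (continuous_const.mul (continuous_const.inner continuous_subtype_val)).rexp.mul
    ((continuous_log_softmax i).comp
      (continuous_pi fun _ => continuous_const.mul (continuous_const.inner hh))).neg

lemma continuous_latentCrossEntropy (hh : Continuous h) :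
    Continuous (latentCrossEntropy v κ Cl h w β) :=
  continuous_finsetSum _ fun i _ => continuous_latentCrossEntropy_term hh i

lemma continuous_latentEntropy : Continuous (latentEntropy v κ Cl) :=
  latentCrossEntropy_posterior (Idx := Idx) ▸ continuous_latentCrossEntropy continuous_subtype_val

lemma dietLossZ_eq_mul_integral (hv : ∀ c, ‖v c‖ = 1) (i₀ : Idx) (hh : Continuous h) :
    dietLossZ d v κ Cl h w β = ((Fintype.card Idx : ℝ) *
        ∫ z, Real.exp (κ * ⟪v (Cl i₀), (z : EuclideanSpace ℝ (Fin d))⟫) ∂sphereUniform d)⁻¹ *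
      ∫ z, latentCrossEntropy v κ Cl h w β z ∂sphereUniform d := by
  have hnormalizer : ∀ i,
      ∫ z, Real.exp (κ * ⟪v (Cl i), (z : EuclideanSpace ℝ (Fin d))⟫) ∂sphereUniform d =
        ∫ z, Real.exp (κ * ⟪v (Cl i₀), (z : EuclideanSpace ℝ (Fin d))⟫) ∂sphereUniform d :=
    fun i => integral_toSphere_comp_inner_eq_of_norm_eq (fun f => f.measurePreserving)
      (fun x => Real.exp (κ * x)) (by rw [hv, hv])
  rw [dietLossZ, mul_inv, mul_assoc]
  simp only [hnormalizer, ← Finset.mul_sum]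
  congr 2
  exact (integral_finsetSum _ fun i _ =>
    (continuous_latentCrossEntropy_term hh i).integrable_sphereUniform).symm

end LatentLoss

theorem dietLossZ_isMinOn_iff_general
    {d : ℕ} {Cset Idx : Type} [Fintype Idx]
    (v : Cset → EuclideanSpace ℝ (Fin d))
    (hv_norm : ∀ c, ‖v c‖ = 1)
    (Cl : Idx → Cset)
    (κ : ℝ)
    (h : Metric.sphere (0 : EuclideanSpace ℝ (Fin d)) 1 → EuclideanSpace ℝ (Fin d))
    (w : Idx → EuclideanSpace ℝ (Fin d)) (β : ℝ)
    (hh_cont : Continuous h) :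
    (∀ (h' : Metric.sphere (0 : EuclideanSpace ℝ (Fin d)) 1 → EuclideanSpace ℝ (Fin d))
      (w' : Idx → EuclideanSpace ℝ (Fin d)) (β' : ℝ), Continuous h' → 0 < β' →
      dietLossZ d v κ Cl h w β ≤ dietLossZ d v κ Cl h' w' β') ↔
    (∀ i k : Idx, ∀ z : Metric.sphere (0 : EuclideanSpace ℝ (Fin d)) 1,
      β * ⟪w i - w k, h z⟫ = κ * ⟪v (Cl i) - v (Cl k), (z : EuclideanSpace ℝ (Fin d))⟫) := by
  rcases isEmpty_or_nonempty Idx with _ | _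
  · simp [dietLossZ]
  obtain ⟨i₀⟩ := ‹Nonempty Idx›
  set c := ((Fintype.card Idx : ℝ) *
    ∫ z, Real.exp (κ * ⟪v (Cl i₀), (z : EuclideanSpace ℝ (Fin d))⟫) ∂sphereUniform d)⁻¹
  have hloss : ∀ h' w' β', Continuous h' → dietLossZ d v κ Cl h' w' β' =
      c * ∫ z, latentCrossEntropy v κ Cl h' w' β' z ∂sphereUniform d :=
    fun _ _ _ hh' => dietLossZ_eq_mul_integral hv_norm i₀ hh'
  constructor
  · intro hmin i k z
    have : Nonempty (Metric.sphere (0 : EuclideanSpace ℝ (Fin d)) 1) := ⟨z⟩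
    have hexp : Continuous fun z : Metric.sphere (0 : EuclideanSpace ℝ (Fin d)) 1 =>
        Real.exp (κ * ⟪v (Cl i₀), (z : EuclideanSpace ℝ (Fin d))⟫) := by fun_prop
    have hc : 0 < c := inv_pos.2 (mul_pos (Nat.cast_pos.2 Fintype.card_pos)
      (integral_exp_pos hexp.integrable_sphereUniform))
    have hle := hmin (↑) (fun i => κ • v (Cl i)) 1 continuous_subtype_val one_pos
    rw [hloss _ _ _ hh_cont, hloss _ _ _ continuous_subtype_val, mul_le_mul_iff_right₀ hc,
      latentCrossEntropy_posterior] at hle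
    have heq := continuous_latentEntropy.eq_of_le_of_integral_le
      (continuous_latentCrossEntropy hh_cont) continuous_latentEntropy.integrable_sphereUniform
      (continuous_latentCrossEntropy hh_cont).integrable_sphereUniform
      latentEntropy_le_latentCrossEntropy hle
    exact (latentCrossEntropy_eq_latentEntropy_iff z).1 (congrFun heq z).symm i k
  · intro hrel h' w' β' hh' _
    rw [hloss _ _ _ hh_cont, hloss _ _ _ hh']
    refine mul_le_mul_of_nonneg_left (integral_mono
      (continuous_latentCrossEntropy hh_cont).integrable_sphereUniform
      (continuous_latentCrossEntropy hh').integrable_sphereUniform fun z => ?_) (by positivity)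
    exact ((latentCrossEntropy_eq_latentEntropy_iff z).2 (hrel · · z)).trans_le
      (latentEntropy_le_latentCrossEntropy z)

/-- **Characterization of global minimizers of the latent DIET objective.** A triple
`(h, W, β)` with `h` continuous and `β > 0` globally minimizes the latent DIET objective
if and only if `β ⟨w i − w k, h z⟩ = κ ⟨v_{𝒞(i)} − v_{𝒞(k)}, z⟩` for all instance labels
`i, k` and all `z` on the unit sphere. -/
theorem dietLossZ_isMinOn_iff
    {d : ℕ} {Cset Idx : Type} [Fintype Cset] [Fintype Idx]
    (v : Cset → EuclideanSpace ℝ (Fin d))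
    (hv_norm : ∀ c, ‖v c‖ = 1)
    (hv_gen : IsAffineGenerator v)
    (Cl : Idx → Cset) (hCl : Function.Surjective Cl)
    (κ : ℝ) (hκ : 0 < κ)
    (h : Metric.sphere (0 : EuclideanSpace ℝ (Fin d)) 1 → EuclideanSpace ℝ (Fin d))
    (w : Idx → EuclideanSpace ℝ (Fin d)) (β : ℝ)
    (hh_cont : Continuous h)
    (hβ : 0 < β) :
    (∀ (h' : Metric.sphere (0 : EuclideanSpace ℝ (Fin d)) 1 → EuclideanSpace ℝ (Fin d))
      (w' : Idx → EuclideanSpace ℝ (Fin d)) (β' : ℝ), Continuous h' → 0 < β' →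
      dietLossZ d v κ Cl h w β ≤ dietLossZ d v κ Cl h' w' β') ↔
    (∀ i k : Idx, ∀ z : Metric.sphere (0 : EuclideanSpace ℝ (Fin d)) 1,
      β * ⟪w i - w k, h z⟫ = κ * ⟪v (Cl i) - v (Cl k), (z : EuclideanSpace ℝ (Fin d))⟫) :=
  dietLossZ_isMinOn_iff_general v hv_norm Cl κ h w β hh_cont
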